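/- Let p be a probability distribution on ℕ with p_i > 0 for all i. Then the complement of the Bayes blind spot in S, namely S \ BS(p) = {q ∈ S : q_i/p_i = q_j/p_j for some i < j}, is a meagre (first Baire category) subset of S, where S carries the subspace topology induced by the ℓ¹-norm. -/

import Mathlib

/-- The set of probability distributions on `ℕ`, as a subset of the Banach space `ℓ¹`. -/
def S : Set (lp (fun _ : ℕ => ℝ) 1) :=
  {q | (∀ i, 0 ≤ q i) ∧ HasSum (fun i => q i) 1}

/-! For `i ≠ j`, the tie `q i / p i = q j / p j` cuts `S` along the kernel of a continuous linear
functional on `ℓ¹` that does not vanish on `S` (at the point mass `δᵢ` it equals `p j`). In a convex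
set such a section is closed with empty interior: the segment from any of its points towards `δᵢ`
leaves it at once. The complement of the blind spot is the countable union of these sections. -/

open Filter Topology

section Hyperplane

variable {E : Type*} [AddCommGroup E] [Module ℝ E] [TopologicalSpace E]
  [IsTopologicalAddGroup E] [ContinuousSMul ℝ E] {s : Set E} {e : E}

theorem Convex.subset_closure_inter_setOf_ne_zero (hs : Convex ℝ s) (f : E →ₗ[ℝ] ℝ)
    (he : e ∈ s) (hfe : f e ≠ 0) : s ⊆ closure (s ∩ {x | f x ≠ 0}) := by
  intro x hx
  rcases ne_or_eq (f x) 0 with hfx | hfx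
  · exact subset_closure ⟨hx, hfx⟩
  have hlim : Tendsto (AffineMap.lineMap x e : ℝ → E) (𝓝[>] 0) (𝓝 x) :=
    (AffineMap.lineMap_continuous.tendsto' 0 x (AffineMap.lineMap_apply_zero x e)).mono_left
      nhdsWithin_le_nhds
  refine mem_closure_of_tendsto hlim ?_
  filter_upwards [Ioo_mem_nhdsGT one_pos] with t ht
  refine ⟨hs.lineMap_mem hx he ⟨ht.1.le, ht.2.le⟩, ?_⟩
  simp [AffineMap.lineMap_apply, hfx, ht.1.ne', hfe]

theorem Convex.isNowhereDense_setOf_apply_eq_zero (hs : Convex ℝ s) (f : E →L[ℝ] ℝ)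
    (he : e ∈ s) (hfe : f e ≠ 0) : IsNowhereDense {x : s | f x = 0} := by
  have hclosed : IsClosed {x : s | f x = 0} :=
    isClosed_eq (f.continuous.comp continuous_subtype_val) continuous_const
  rw [hclosed.isNowhereDense_iff, interior_eq_empty_iff_dense_compl, Subtype.dense_iff]
  convert hs.subset_closure_inter_setOf_ne_zero (f : E →ₗ[ℝ] ℝ) he hfe using 2
  ext x
  simp +contextual [and_comm]

end Hyperplane

theorem convex_S : Convex ℝ S := by
  rintro q ⟨hq0, hq1⟩ r ⟨hr0, hr1⟩ a b ha hb hab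
  refine ⟨fun i => ?_, ?_⟩
  · change 0 ≤ a * q i + b * r i
    exact add_nonneg (mul_nonneg ha (hq0 i)) (mul_nonneg hb (hr0 i))
  · change HasSum (fun i => a * q i + b * r i) 1
    simpa [hab] using (hq1.mul_left a).add (hr1.mul_left b)

theorem single_mem_S (i : ℕ) : lp.single 1 i (1 : ℝ) ∈ S := by
  refine ⟨fun k => ?_, ?_⟩
  · rw [lp.single_apply, Pi.single_apply]; split_ifs <;> norm_num
  · rw [lp.coeFn_single]; exact hasSum_pi_single i 1

/-- `q i / p i = q j / p j` cross-multiplied, so that it becomes linear in `q`. -/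
noncomputable def ratioDefect (p : ℕ → ℝ) (i j : ℕ) : lp (fun _ : ℕ => ℝ) 1 →L[ℝ] ℝ :=
  p j • lp.evalCLM ℝ (fun _ : ℕ => ℝ) 1 i - p i • lp.evalCLM ℝ (fun _ : ℕ => ℝ) 1 j

theorem ratioDefect_apply (p : ℕ → ℝ) (i j : ℕ) (q : lp (fun _ : ℕ => ℝ) 1) :
    ratioDefect p i j q = q i * p j - q j * p i := by
  simp [ratioDefect, lp.evalCLM, mul_comm]

theorem isNowhereDense_setOf_ratioDefect_eq_zero {p : ℕ → ℝ} {i j : ℕ} (hij : i ≠ j)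
    (hpj : p j ≠ 0) : IsNowhereDense {q : S | ratioDefect p i j q = 0} :=
  convex_S.isNowhereDense_setOf_apply_eq_zero _ (single_mem_S i) <| by
    simpa [ratioDefect_apply, lp.single_apply, hij.symm] using hpj

theorem bayes_blind_spot_compl_meagre_general (p : ℕ → ℝ)
    (hpos : ∀ i, 0 < p i) :
    IsMeagre {q : S | ∃ i j : ℕ, i < j ∧ q.1 i / p i = q.1 j / p j} := by
  have hcover : {q : S | ∃ i j : ℕ, i < j ∧ q.1 i / p i = q.1 j / p j} ⊆
      ⋃ (i : ℕ) (j : ℕ) (_ : i < j), {q : S | ratioDefect p i j q = 0} := by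
    rintro q ⟨i, j, hij, hq⟩
    simp only [Set.mem_iUnion, Set.mem_ofPred_eq, ratioDefect_apply, sub_eq_zero]
    exact ⟨i, j, hij, (div_eq_div_iff (hpos i).ne' (hpos j).ne').mp hq⟩
  refine IsMeagre.mono hcover <| isMeagre_iUnion fun i => isMeagre_iUnion fun j =>
    isMeagre_iUnion fun hij => ?_
  exact (isNowhereDense_setOf_ratioDefect_eq_zero hij.ne (hpos j).ne').isMeagre

/-- For a probability distribution `p` on `ℕ` with all components positive,
the complement of the Bayes blind spot in `S`, namely
`{q ∈ S : qᵢ/pᵢ = qⱼ/pⱼ for some i < j}`, is meagre in `S` for the ℓ¹-subspace topology. -/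
theorem bayes_blind_spot_compl_meagre (p : ℕ → ℝ)
    (hpos : ∀ i, 0 < p i) (hsum : HasSum p 1) :
    IsMeagre {q : S | ∃ i j : ℕ, i < j ∧ q.1 i / p i = q.1 j / p j} :=
  bayes_blind_spot_compl_meagre_general p hpos
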